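/- arXiv:2102.11846 — 3 statements merged into one kernel-verified Lean document; each statement's English description precedes it below -/
import Mathlib

section
/- For x ∈ [3/4, 1], the state ρ'(x) = ½(γ(x) + γ'(x)), with γ(x) = x φ₊ + (1−x)|00⟩⟨00| and γ'(x) = x|00⟩⟨00| + (1−x)|11⟩⟨11| + √(x(1−x)/3)(|00⟩⟨11|+|11⟩⟨00|) on ℂ³⊗ℂ³, has entanglement fraction ⟨φ₊|ρ'(x)|φ₊⟩ = (1 + √(x(1−x)/3) + x)/3, and this is maximized over x ∈ [3/4,1] at x* = 1/2 + √3/4, where it equals 1/2 + √3/9 > 2/3. -/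
open Matrix

/-- The maximally entangled qutrit vector `|φ₊⟩ = (|00⟩+|11⟩+|22⟩)/√3`. -/
noncomputable def phiPlusVec : Fin 3 × Fin 3 → ℂ :=
  fun p => if p.1 = p.2 then ((Real.sqrt 3)⁻¹ : ℝ) else 0

/-- The projector `φ₊ = |φ₊⟩⟨φ₊|` on `ℂ³⊗ℂ³`. -/
noncomputable def phiPlusProj : Matrix (Fin 3 × Fin 3) (Fin 3 × Fin 3) ℂ :=
  Matrix.of fun p q => phiPlusVec p * (starRingEnd ℂ) (phiPlusVec q)

/-- `γ(x) = x φ₊ + (1−x)|00⟩⟨00|`. -/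
noncomputable def gammaSt (x : ℝ) : Matrix (Fin 3 × Fin 3) (Fin 3 × Fin 3) ℂ :=
  (x : ℂ) • phiPlusProj
    + ((1 - x : ℝ) : ℂ) • Matrix.single ((0:Fin 3),(0:Fin 3)) ((0:Fin 3),(0:Fin 3)) 1

/-- `γ'(x) = x|00⟩⟨00| + (1−x)|11⟩⟨11| + √(x(1−x)/3)(|00⟩⟨11|+|11⟩⟨00|)`. -/
noncomputable def gammaSt' (x : ℝ) : Matrix (Fin 3 × Fin 3) (Fin 3 × Fin 3) ℂ :=
  (x : ℂ) • Matrix.single ((0:Fin 3),(0:Fin 3)) ((0:Fin 3),(0:Fin 3)) 1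
    + ((1 - x : ℝ) : ℂ) • Matrix.single ((1:Fin 3),(1:Fin 3)) ((1:Fin 3),(1:Fin 3)) 1
    + ((Real.sqrt (x * (1 - x) / 3) : ℝ) : ℂ) •
        (Matrix.single ((0:Fin 3),(0:Fin 3)) ((1:Fin 3),(1:Fin 3)) 1
          + Matrix.single ((1:Fin 3),(1:Fin 3)) ((0:Fin 3),(0:Fin 3)) 1)

set_option maxHeartbeats 2000000
set_option maxHeartbeats 2000000 in
lemma sqrt3_sq : Real.sqrt 3 ^ 2 = 3 := Real.sq_sqrt (by norm_num)
lemma sqrt3_lb : (3/2 : ℝ) < Real.sqrt 3 := by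
  nlinarith [sqrt3_sq, Real.sqrt_nonneg 3]
lemma sqrt3_ub : Real.sqrt 3 < 2 := by
  nlinarith [sqrt3_sq, Real.sqrt_nonneg 3]

lemma xstar_prod : ((1/2 + Real.sqrt 3 / 4) * (1 - (1/2 + Real.sqrt 3 / 4)) / 3 : ℝ)
    = (Real.sqrt 3 / 12) ^ 2 := by nlinarith [sqrt3_sq]

lemma xstar_sqrt :
    Real.sqrt ((1/2 + Real.sqrt 3 / 4) * (1 - (1/2 + Real.sqrt 3 / 4)) / 3)
      = Real.sqrt 3 / 12 := by
  rw [xstar_prod, Real.sqrt_sq (by positivity)]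

/-- For `x ∈ [3/4,1]`, the state `ρ'(x) = ½(γ(x)+γ'(x))` has entanglement fraction
`⟨φ₊|ρ'(x)|φ₊⟩ = (1 + √(x(1−x)/3) + x)/3`, maximized over `[3/4,1]` at
`x* = 1/2 + √3/4` with value `1/2 + √3/9 > 2/3`. -/
theorem catalytic_state_entanglement_fraction :
    (∀ x ∈ Set.Icc (3/4 : ℝ) 1,
      (phiPlusProj * ((2 : ℂ)⁻¹ • (gammaSt x + gammaSt' x))).trace
        = (((1 + Real.sqrt (x * (1 - x) / 3) + x) / 3 : ℝ) : ℂ)) ∧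
    ((1/2 + Real.sqrt 3 / 4 : ℝ) ∈ Set.Icc (3/4 : ℝ) 1) ∧
    (∀ x ∈ Set.Icc (3/4 : ℝ) 1,
      (1 + Real.sqrt (x * (1 - x) / 3) + x) / 3
        ≤ (1 + Real.sqrt ((1/2 + Real.sqrt 3 / 4) * (1 - (1/2 + Real.sqrt 3 / 4)) / 3)
            + (1/2 + Real.sqrt 3 / 4)) / 3) ∧
    (1 + Real.sqrt ((1/2 + Real.sqrt 3 / 4) * (1 - (1/2 + Real.sqrt 3 / 4)) / 3)
        + (1/2 + Real.sqrt 3 / 4)) / 3 = 1/2 + Real.sqrt 3 / 9 ∧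
    (2/3 : ℝ) < 1/2 + Real.sqrt 3 / 9 := by
  refine ⟨?_, ?_, ?_, ?_, ?_⟩
  · intro x hx
    have h3r : ((Real.sqrt 3)⁻¹ ^ 2 : ℝ) = 1/3 := by
      rw [sq, ← mul_inv, Real.mul_self_sqrt (by norm_num)]; norm_num
    have h3c : (((Real.sqrt 3 : ℝ) : ℂ))⁻¹ ^ 2 = 1/3 := by
      rw [← Complex.ofReal_inv, ← Complex.ofReal_pow, h3r]; norm_num
    simp only [Matrix.trace, Matrix.diag, Matrix.mul_apply, phiPlusProj, phiPlusVec,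
      gammaSt, gammaSt', Matrix.add_apply, Matrix.smul_apply, Matrix.of_apply,
      Matrix.single, Fin.sum_univ_succ, Fin.sum_univ_zero, Fintype.sum_prod_type,
      smul_eq_mul, map_inv₀, Complex.conj_ofReal, ← Prod.mk_zero_zero, ← Prod.mk_one_one,
      Prod.mk.injEq, map_zero]
    norm_num
    push_cast
    ring_nf
    simp only [false_and, if_false, mul_zero, zero_mul, map_zero, add_zero, zero_add]
    linear_combination (1 + (((Real.sqrt 3 : ℝ) : ℂ))⁻¹ * ((Real.sqrt (x - x^2) : ℝ) : ℂ)
      + (x:ℂ) * (9 * (((Real.sqrt 3 : ℝ) : ℂ))⁻¹ ^ 2 / 2 + 1)) * h3c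
  · constructor <;> nlinarith [sqrt3_lb, sqrt3_ub]
  · intro x hx
    obtain ⟨h1, h2⟩ := hx
    rw [xstar_sqrt]
    have hs := Real.sqrt_nonneg (x * (1 - x) / 3)
    have hsq : Real.sqrt (x * (1 - x) / 3) ^ 2 = x * (1 - x) / 3 := by
      rw [Real.sq_sqrt]; nlinarith
    nlinarith [sqrt3_sq, sqrt3_lb, sq_nonneg (Real.sqrt (x*(1-x)/3) * Real.sqrt 3 - (1/2 + Real.sqrt 3/4 - x)),
      sq_nonneg (x - 1/2 - Real.sqrt 3/4)]
  · rw [xstar_sqrt]; ring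
  · nlinarith [sqrt3_lb]
end

section
/- The function x ↦ (1 + √(x(1−x)/3) + x)/3 on [3/4, 1] attains its maximum at x* = 1/2 + √3/4, with maximum value 1/2 + √3/9 ≈ 0.6924, and the corresponding teleportation fidelity (f·3 + 1)/4 at this maximum equals 5/8 + √3/12 ≈ 0.7693, which is strictly greater than 3/4. -/
open Real

/-- The function `x ↦ (1 + √(x(1−x)/3) + x)/3` on `[3/4, 1]` attains its maximum at
`x* = 1/2 + √3/4`, with maximum value `1/2 + √3/9`, and the corresponding
teleportation fidelity `(f·3 + 1)/4` at this maximum equals `5/8 + √3/12`, which is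
strictly greater than `3/4`. -/
theorem entanglement_fraction_maximum :
    let f : ℝ → ℝ := fun x => (1 + Real.sqrt (x * (1 - x) / 3) + x) / 3
    let xstar : ℝ := 1/2 + Real.sqrt 3 / 4
    (xstar ∈ Set.Icc (3/4 : ℝ) 1) ∧
    (∀ x ∈ Set.Icc (3/4 : ℝ) 1, f x ≤ f xstar) ∧
    f xstar = 1/2 + Real.sqrt 3 / 9 ∧
    (f xstar * 3 + 1) / 4 = 5/8 + Real.sqrt 3 / 12 ∧
    5/8 + Real.sqrt 3 / 12 > 3/4 := by
  intro f xstar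
  have hs0 : (0:ℝ) ≤ Real.sqrt 3 := Real.sqrt_nonneg 3
  have hs : Real.sqrt 3 ^ 2 = 3 := Real.sq_sqrt (by norm_num)
  have hs32 : (3/2 : ℝ) < Real.sqrt 3 := by nlinarith [hs, hs0]
  have hs2 : Real.sqrt 3 < 2 := by nlinarith [hs, hs0]
  -- value at xstar
  have hval : Real.sqrt (xstar * (1 - xstar) / 3) = Real.sqrt 3 / 12 := by
    have h1 : xstar * (1 - xstar) / 3 = (Real.sqrt 3 / 12) ^ 2 := by
      show (1/2 + Real.sqrt 3 / 4) * (1 - (1/2 + Real.sqrt 3 / 4)) / 3 = _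
      nlinarith [hs]
    rw [h1, Real.sqrt_sq (by positivity)]
  have hfx : f xstar = 1/2 + Real.sqrt 3 / 9 := by
    show (1 + Real.sqrt (xstar * (1 - xstar) / 3) + xstar) / 3 = _
    rw [hval]; show (1 + Real.sqrt 3 / 12 + (1/2 + Real.sqrt 3 / 4)) / 3 = _; ring
  refine ⟨⟨show (3/4:ℝ) ≤ 1/2 + Real.sqrt 3/4 by nlinarith, show (1/2 + Real.sqrt 3/4 : ℝ) ≤ 1 by nlinarith⟩, ?_, hfx, by rw [hfx]; ring, by nlinarith⟩
  intro x hx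
  obtain ⟨hx1, hx2⟩ := hx
  rw [hfx]
  show (1 + Real.sqrt (x * (1 - x) / 3) + x) / 3 ≤ 1/2 + Real.sqrt 3 / 9
  have key : Real.sqrt (x * (1 - x) / 3) ≤ 1/2 + Real.sqrt 3 / 3 - x := by
    rw [show (1/2 + Real.sqrt 3 / 3 - x : ℝ) = Real.sqrt ((1/2 + Real.sqrt 3 / 3 - x)^2)
      from (Real.sqrt_sq (by nlinarith)).symm]
    apply Real.sqrt_le_sqrt
    nlinarith [sq_nonneg (x - 1/2 - Real.sqrt 3 / 4), hs]
  linarith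
end

section
/- Let λ = (1/2, 1/2, 0) and λ' = (x, (1−x)/2, (1−x)/2) where x ∈ (1/2, 1) is the unique solution of h(x) = x·log 2 with h the binary entropy h(x) = −x log x − (1−x) log(1−x). Then the Shannon entropy of λ' equals the Shannon entropy of λ (both equal log 2), and the entanglement fraction (Σᵢ √λ'ᵢ)²/3 of the corresponding pure state strictly exceeds (Σᵢ √λᵢ)²/3 = 2/3. -/
open Real

/-- Shannon entropy of a probability vector (natural logarithm), with the
convention `0 · log 0 = 0` (automatic since `Real.log 0 = 0`). -/
noncomputable def shannonEntropy {n : ℕ} (p : Fin n → ℝ) : ℝ :=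
  -∑ i, p i * Real.log (p i)

lemma aux_lt_89 (x : ℝ) (hx1 : 1/2 < x) (hx2 : x < 1)
    (hsol : -x * Real.log x - (1 - x) * Real.log (1 - x) = x * Real.log 2) :
    x < 8/9 := by
  by_contra h
  push_neg at h
  have hx0 : (0:ℝ) < x := by linarith
  have ht0 : (0:ℝ) < 1 - x := by linarith
  set t := 1 - x with ht
  have ht9 : t ≤ 1/9 := by rw [ht]; linarith
  -- -x log x ≤ t  (from log x ≥ 1 - 1/x)
  have h1 : -x * Real.log x ≤ t := by
    have h1' := Real.log_le_sub_one_of_pos (show (0:ℝ) < x⁻¹ by positivity)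
    rw [Real.log_inv] at h1'
    have : x * (-Real.log x) ≤ x * (x⁻¹ - 1) :=
      mul_le_mul_of_nonneg_left h1' hx0.le
    have hxinv : x * (x⁻¹ - 1) = 1 - x := by field_simp
    nlinarith
  have hs0 : (0:ℝ) ≤ Real.sqrt t := Real.sqrt_nonneg t
  have hst : Real.sqrt t ^ 2 = t := Real.sq_sqrt ht0.le
  have hsp : (0:ℝ) < Real.sqrt t := Real.sqrt_pos.mpr ht0
  have hs3 : Real.sqrt t ≤ 1/3 := by
    nlinarith [hst, hs0]
  -- -t log t ≤ 2√t - 2t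
  have hlog : Real.log t = 2 * Real.log (Real.sqrt t) := by
    rw [Real.log_sqrt ht0.le]; ring
  have hA : Real.sqrt t - 1 ≤ Real.sqrt t * Real.log (Real.sqrt t) := by
    have h1' := Real.log_le_sub_one_of_pos (show (0:ℝ) < (Real.sqrt t)⁻¹ by positivity)
    rw [Real.log_inv] at h1'
    have := mul_le_mul_of_nonneg_left h1' hs0
    have hxinv : Real.sqrt t * ((Real.sqrt t)⁻¹ - 1) = 1 - Real.sqrt t := by
      field_simp
    nlinarith
  have h2 : -t * Real.log t ≤ 2 * Real.sqrt t - 2 * t := by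
    -- multiply hA by 2√t : 2t log√t ≥ 2√t(√t - 1) = 2t - 2√t
    have hkey : t - Real.sqrt t ≤ t * Real.log (Real.sqrt t) := by
      nlinarith [mul_le_mul_of_nonneg_left hA hs0, hst]
    have hlog' : t * Real.log t = 2 * (t * Real.log (Real.sqrt t)) := by
      rw [hlog]; ring
    linarith
  have h2b : 2 * Real.sqrt t - 2 * t ≤ 4/9 := by
    nlinarith [mul_nonneg (show (0:ℝ) ≤ 1 - 3 * Real.sqrt t by linarith)
      (show (0:ℝ) ≤ 2 - 3 * Real.sqrt t by linarith), hst]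
  have hlog2 : (0.6931471803 : ℝ) < Real.log 2 := Real.log_two_gt_d9
  have hxl : (8/9 : ℝ) * Real.log 2 ≤ x * Real.log 2 := by
    apply mul_le_mul_of_nonneg_right h (by linarith)
  -- hsol : -x log x - t log t = x log 2
  have : x * Real.log 2 ≤ t + 4/9 := by
    have : -x * Real.log x + (-t * Real.log t) = x * Real.log 2 := by
      rw [ht]; linarith [hsol]
    linarith
  nlinarith

/-- Let `λ = (1/2, 1/2, 0)` and `λ' = (x, (1−x)/2, (1−x)/2)` where `x ∈ (1/2,1)`
solves `h(x) = x·log 2` for the binary entropy `h`.  Then both vectors have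
Shannon entropy `log 2`, and the entanglement fraction `(Σ√λ'ᵢ)²/3` of the
corresponding pure state strictly exceeds `(Σ√λᵢ)²/3 = 2/3`. -/
theorem catalytic_example_entropy_and_fraction (x : ℝ)
    (hx : x ∈ Set.Ioo (1/2 : ℝ) 1)
    (hsol : -x * Real.log x - (1 - x) * Real.log (1 - x) = x * Real.log 2)
    (lam lam' : Fin 3 → ℝ)
    (hlam : lam = ![1/2, 1/2, 0])
    (hlam' : lam' = ![x, (1 - x)/2, (1 - x)/2]) :
    shannonEntropy lam' = Real.log 2 ∧
    shannonEntropy lam = Real.log 2 ∧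
    (∑ i, Real.sqrt (lam' i)) ^ 2 / 3 > (∑ i, Real.sqrt (lam i)) ^ 2 / 3 ∧
    (∑ i, Real.sqrt (lam i)) ^ 2 / 3 = 2 / 3 := by
  obtain ⟨hx1, hx2⟩ := hx
  have hx0 : (0:ℝ) < x := by linarith
  have ht0 : (0:ℝ) < 1 - x := by linarith
  subst hlam hlam'
  have hlamsum : (∑ i, Real.sqrt (![1/2, 1/2, 0] i)) = 2 * Real.sqrt (1/2) := by
    simp [Fin.sum_univ_three]; ring
  have hhalf : Real.sqrt (1/2 : ℝ) ^ 2 = 1/2 := Real.sq_sqrt (by norm_num)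
  have hlamsq : (∑ i, Real.sqrt (![1/2, 1/2, 0] i)) ^ 2 = 2 := by
    rw [hlamsum]; nlinarith
  refine ⟨?_, ?_, ?_, ?_⟩
  · -- entropy of lam'
    simp only [shannonEntropy, Fin.sum_univ_three, Matrix.cons_val_zero,
      Matrix.cons_val_one, Matrix.head_cons, Matrix.cons_val_two, Matrix.tail_cons]
    have hld : Real.log ((1 - x)/2) = Real.log (1 - x) - Real.log 2 :=
      Real.log_div ht0.ne' two_ne_zero
    rw [hld]; ring_nf; ring_nf at hsol; linarith
  · -- entropy of lam
    simp only [shannonEntropy, Fin.sum_univ_three, Matrix.cons_val_zero,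
      Matrix.cons_val_one, Matrix.head_cons, Matrix.cons_val_two, Matrix.tail_cons]
    have : Real.log ((1:ℝ)/2) = -Real.log 2 := by
      rw [one_div, Real.log_inv]
    rw [this]; ring
  · -- strict inequality of fractions
    rw [gt_iff_lt, div_lt_div_iff₀ (by norm_num) (by norm_num)]
    have hx89 : x < 8/9 := aux_lt_89 x hx1 hx2 hsol
    have hsum' : (∑ i, Real.sqrt (![x, (1 - x)/2, (1 - x)/2] i))
        = Real.sqrt x + 2 * Real.sqrt ((1 - x)/2) := by
      simp [Fin.sum_univ_three]; ring
    rw [hlamsq, hsum']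
    set a := Real.sqrt x with ha
    set b := Real.sqrt ((1 - x)/2) with hb
    have ha2 : a ^ 2 = x := Real.sq_sqrt hx0.le
    have hb2 : b ^ 2 = (1 - x)/2 := Real.sq_sqrt (by linarith)
    have ha0 : 0 < a := Real.sqrt_pos.mpr hx0
    have hb0 : 0 < b := Real.sqrt_pos.mpr (by linarith)
    -- need (a + 2b)^2 > 2, i.e. 4ab > x, from (4ab)^2 = 8x(1-x) > x^2
    have hab : x < 4 * (a * b) := by
      nlinarith [mul_pos ha0 hb0]
    nlinarith
  · rw [hlamsq]
end
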